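/- arXiv:0709.1711 — 3 statements merged into one kernel-verified Lean document; each statement's English description precedes it below -/
import Mathlib

section
/- Let k ≥ 3 and let p₁,…,p_k ∈ W be nonzero nonpositive vectors (indices modulo k) such that ⟨p_i, p_{i+1}⟩ ≠ 0 for all i. Then the sum Σ_{i=1}^{k} Area Δ(c, p_i, p_{i+1}) = Σ_{i=1}^{k} 2·arg(−⟨c,p_i⟩·⟨p_i,p_{i+1}⟩·⟨p_{i+1},c⟩) takes the same value for every negative vector c ∈ W; that is, the area of the closed geodesic polygon with successive vertices p₁,…,p_k does not depend on the choice of the centre c. (Note that ⟨c,p⟩ ≠ 0 automatically whenever c is negative and p is nonzero nonpositive.) -/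
noncomputable section
open Matrix Complex
namespace HView

abbrev W : Type := Fin 2 → ℂ

def herm (x y : W) : ℂ := x 0 * (starRingEnd ℂ) (y 0) - x 1 * (starRingEnd ℂ) (y 1)

def IsNeg (p : W) : Prop := p ≠ 0 ∧ (herm p p).re < 0
def IsIso (p : W) : Prop := p ≠ 0 ∧ herm p p = 0
def IsNonpos (p : W) : Prop := p ≠ 0 ∧ (herm p p).re ≤ 0

def triArea (p₁ p₂ p₃ : W) : ℝ :=
  2 * Complex.arg (-(herm p₁ p₂ * herm p₂ p₃ * herm p₃ p₁))

def Jm : Matrix (Fin 2) (Fin 2) ℂ := !![1, 0; 0, -1]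

def SU11 : Subgroup (SpecialLinearGroup (Fin 2) ℂ) where
  carrier := {A | (A : Matrix (Fin 2) (Fin 2) ℂ)ᴴ * Jm * (A : Matrix (Fin 2) (Fin 2) ℂ) = Jm}
  one_mem' := by simp
  mul_mem' := by
    intro A B hA hB
    simp only [Set.mem_setOf_eq] at hA hB ⊢
    have hco : ((A * B : SpecialLinearGroup (Fin 2) ℂ) : Matrix (Fin 2) (Fin 2) ℂ)
        = (A : Matrix (Fin 2) (Fin 2) ℂ) * (B : Matrix (Fin 2) (Fin 2) ℂ) := rfl
    rw [hco, conjTranspose_mul]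
    calc (B : Matrix (Fin 2) (Fin 2) ℂ)ᴴ * (A : Matrix (Fin 2) (Fin 2) ℂ)ᴴ * Jm *
          ((A : Matrix (Fin 2) (Fin 2) ℂ) * (B : Matrix (Fin 2) (Fin 2) ℂ))
        = (B : Matrix (Fin 2) (Fin 2) ℂ)ᴴ *
          ((A : Matrix (Fin 2) (Fin 2) ℂ)ᴴ * Jm * (A : Matrix (Fin 2) (Fin 2) ℂ)) *
          (B : Matrix (Fin 2) (Fin 2) ℂ) := by noncomm_ring
      _ = Jm := by rw [hA]; exact hB
  inv_mem' := by
    intro A hA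
    simp only [Set.mem_setOf_eq] at hA ⊢
    have h1 : (A : Matrix (Fin 2) (Fin 2) ℂ) *
        ((A⁻¹ : SpecialLinearGroup (Fin 2) ℂ) : Matrix (Fin 2) (Fin 2) ℂ) = 1 := by
      rw [← Matrix.SpecialLinearGroup.coe_mul, mul_inv_cancel,
        Matrix.SpecialLinearGroup.coe_one]
    have h2 : ((A⁻¹ : SpecialLinearGroup (Fin 2) ℂ) : Matrix (Fin 2) (Fin 2) ℂ)ᴴ *
        (A : Matrix (Fin 2) (Fin 2) ℂ)ᴴ = 1 := by
      rw [← conjTranspose_mul, h1, conjTranspose_one]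
    calc ((A⁻¹ : SpecialLinearGroup (Fin 2) ℂ) : Matrix (Fin 2) (Fin 2) ℂ)ᴴ * Jm *
          ((A⁻¹ : SpecialLinearGroup (Fin 2) ℂ) : Matrix (Fin 2) (Fin 2) ℂ)
        = ((A⁻¹ : SpecialLinearGroup (Fin 2) ℂ) : Matrix (Fin 2) (Fin 2) ℂ)ᴴ *
          ((A : Matrix (Fin 2) (Fin 2) ℂ)ᴴ * Jm * (A : Matrix (Fin 2) (Fin 2) ℂ)) *
          ((A⁻¹ : SpecialLinearGroup (Fin 2) ℂ) : Matrix (Fin 2) (Fin 2) ℂ) := by rw [hA]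
      _ = (((A⁻¹ : SpecialLinearGroup (Fin 2) ℂ) : Matrix (Fin 2) (Fin 2) ℂ)ᴴ *
            (A : Matrix (Fin 2) (Fin 2) ℂ)ᴴ) * Jm *
          ((A : Matrix (Fin 2) (Fin 2) ℂ) *
            ((A⁻¹ : SpecialLinearGroup (Fin 2) ℂ) : Matrix (Fin 2) (Fin 2) ℂ)) := by noncomm_ring
      _ = Jm := by rw [h1, h2, one_mul, mul_one]


instance : Fact (Even (Fintype.card (Fin 2))) := ⟨by decide⟩

def negOne : SU11 := ⟨-1, by
  show ((-1 : SpecialLinearGroup (Fin 2) ℂ) : Matrix (Fin 2) (Fin 2) ℂ)ᴴ * Jm *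
    ((-1 : SpecialLinearGroup (Fin 2) ℂ) : Matrix (Fin 2) (Fin 2) ℂ) = Jm
  simp⟩

lemma negOne_mul_negOne : negOne * negOne = 1 := by
  apply Subtype.ext
  show ((-1 : SpecialLinearGroup (Fin 2) ℂ)) * (-1) = 1
  apply Subtype.ext
  show ((-1 : Matrix (Fin 2) (Fin 2) ℂ)) * (-1) = 1
  simp

lemma negOne_central (g : SU11) : g * negOne = negOne * g := by
  apply Subtype.ext
  apply Subtype.ext
  show ((g : SpecialLinearGroup (Fin 2) ℂ) : Matrix (Fin 2) (Fin 2) ℂ) * (-1)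
      = (-1) * ((g : SpecialLinearGroup (Fin 2) ℂ) : Matrix (Fin 2) (Fin 2) ℂ)
  simp

def pm1 : Subgroup SU11 where
  carrier := {1, negOne}
  one_mem' := Or.inl rfl
  mul_mem' := by
    rintro a b (rfl | ha) (rfl | hb)
    · exact Or.inl (one_mul 1)
    · rw [Set.mem_singleton_iff] at hb; subst hb
      exact Or.inr (by rw [one_mul]; rfl)
    · rw [Set.mem_singleton_iff] at ha; subst ha
      exact Or.inr (by rw [mul_one]; rfl)
    · rw [Set.mem_singleton_iff] at ha hb; subst ha; subst hb
      exact Or.inl negOne_mul_negOne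
  inv_mem' := by
    rintro a (rfl | ha)
    · exact Or.inl inv_one
    · rw [Set.mem_singleton_iff] at ha; subst ha
      refine Or.inr ?_
      rw [Set.mem_singleton_iff, inv_eq_iff_mul_eq_one, negOne_mul_negOne]

instance pm1_normal : pm1.Normal := by
  constructor
  intro x hx g
  rcases hx with rfl | hx
  · simpa using pm1.one_mem
  · rw [Set.mem_singleton_iff] at hx; subst hx
    have h : g * negOne * g⁻¹ = negOne := by
      rw [negOne_central, mul_assoc, mul_inv_cancel, mul_one]
    rw [h]
    exact Or.inr rfl

abbrev PU11 := SU11 ⧸ pm1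

def mobius (A : SU11) (z : ℂ) : ℂ :=
  (((A : SpecialLinearGroup (Fin 2) ℂ) : Matrix (Fin 2) (Fin 2) ℂ) 0 0 * z +
    ((A : SpecialLinearGroup (Fin 2) ℂ) : Matrix (Fin 2) (Fin 2) ℂ) 0 1) /
  (((A : SpecialLinearGroup (Fin 2) ℂ) : Matrix (Fin 2) (Fin 2) ℂ) 1 0 * z +
    ((A : SpecialLinearGroup (Fin 2) ℂ) : Matrix (Fin 2) (Fin 2) ℂ) 1 1)

lemma mobius_mul_negOne (A : SU11) (z : ℂ) : mobius (A * negOne) z = mobius A z := by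
  have hm : (((A * negOne : SU11) : SpecialLinearGroup (Fin 2) ℂ) : Matrix (Fin 2) (Fin 2) ℂ)
      = -(((A : SpecialLinearGroup (Fin 2) ℂ) : Matrix (Fin 2) (Fin 2) ℂ)) := by
    show ((A : SpecialLinearGroup (Fin 2) ℂ) : Matrix (Fin 2) (Fin 2) ℂ) *
      (-1 : Matrix (Fin 2) (Fin 2) ℂ) = _
    simp
  set M := ((A : SpecialLinearGroup (Fin 2) ℂ) : Matrix (Fin 2) (Fin 2) ℂ) with hM
  unfold mobius
  rw [hm]
  simp only [Matrix.neg_apply]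
  rw [show -M 0 0 * z + -M 0 1 = -(M 0 0 * z + M 0 1) by ring,
    show -M 1 0 * z + -M 1 1 = -(M 1 0 * z + M 1 1) by ring, neg_div_neg_eq]

def pact (g : PU11) : ℂ → ℂ :=
  Quotient.liftOn' g (fun A => mobius A) (by
    intro a b hab
    have hab' : a⁻¹ * b ∈ pm1 := QuotientGroup.leftRel_apply.mp hab
    have key : b = a ∨ b = a * negOne := by
      rcases hab' with h | h
      · left
        have : a⁻¹ * b = 1 := h
        rw [inv_mul_eq_one] at this
        exact this.symm
      · right
        rw [Set.mem_singleton_iff] at h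
        rw [inv_mul_eq_iff_eq_mul] at h
        exact h
    funext z
    rcases key with rfl | rfl
    · rfl
    · exact (mobius_mul_negOne a z).symm)

lemma pact_mk (A : SU11) (z : ℂ) : pact (QuotientGroup.mk A : PU11) z = mobius A z := rfl


instance : TopologicalSpace (SpecialLinearGroup (Fin 2) ℂ) :=
  instTopologicalSpaceSubtype

def IsHyperbolic (g : PU11) : Prop :=
  ∃ A : SU11, (QuotientGroup.mk A : PU11) = g ∧
    (Matrix.trace ((A : SpecialLinearGroup (Fin 2) ℂ) : Matrix (Fin 2) (Fin 2) ℂ)).im = 0 ∧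
    2 < |(Matrix.trace ((A : SpecialLinearGroup (Fin 2) ℂ) : Matrix (Fin 2) (Fin 2) ℂ)).re|

def IsAttractor (g : PU11) (z : ℂ) : Prop :=
  ‖z‖ = 1 ∧ ∃ A : SU11, (QuotientGroup.mk A : PU11) = g ∧
    ∃ lam : ℂ, 1 < ‖lam‖ ∧
      ((A : SpecialLinearGroup (Fin 2) ℂ) : Matrix (Fin 2) (Fin 2) ℂ).mulVec ![z, 1]
        = lam • ![z, 1]

def IsRepeller (g : PU11) (z : ℂ) : Prop :=
  ‖z‖ = 1 ∧ ∃ A : SU11, (QuotientGroup.mk A : PU11) = g ∧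
    ∃ lam : ℂ, ‖lam‖ < 1 ∧
      ((A : SpecialLinearGroup (Fin 2) ℂ) : Matrix (Fin 2) (Fin 2) ℂ).mulVec ![z, 1]
        = lam • ![z, 1]

def IsPositiveCycle (l : List ℂ) : Prop :=
  3 ≤ l.length ∧ ∃ t : Fin l.length → ℝ,
    StrictMono t ∧ (∀ j k : Fin l.length, t j - t k < 2 * Real.pi) ∧
    ∀ j : Fin l.length, l.get j = Complex.exp (Complex.I * (t j : ℂ))

def IsNegativeCycle (l : List ℂ) : Prop :=
  3 ≤ l.length ∧ ∃ t : Fin l.length → ℝ,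
    StrictAnti t ∧ (∀ j k : Fin l.length, t j - t k < 2 * Real.pi) ∧
    ∀ j : Fin l.length, l.get j = Complex.exp (Complex.I * (t j : ℂ))

def longRel (n : ℕ) : FreeGroup (ZMod n) :=
  (((List.range n).map (fun k => FreeGroup.of ((k + 1 : ℕ) : ZMod n))).reverse).prod

def Hrels (n : ℕ) : Set (FreeGroup (ZMod n)) :=
  {x | ∃ i : ZMod n, x = FreeGroup.of i * FreeGroup.of i} ∪ {longRel n}

abbrev H (n : ℕ) := PresentedGroup (Hrels n)

def r (n : ℕ) (i : ZMod n) : H n := PresentedGroup.of i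

def pts {n : ℕ} (A : ZMod n → SU11) (p : W) : ℕ → W
  | 0 => p
  | (k+1) => (((A ((k + 1 : ℕ) : ZMod n) : SpecialLinearGroup (Fin 2) ℂ)
      : Matrix (Fin 2) (Fin 2) ℂ)).mulVec (pts A p k)

def IsLift {n : ℕ} (ρ : H n →* PU11) (A : ZMod n → SU11) : Prop :=
  (∀ i : ZMod n, (QuotientGroup.mk (A i) : PU11) = ρ (r n i)) ∧
  ((((List.range n).map (fun k => A ((k + 1 : ℕ) : ZMod n))).reverse).prod = 1 ∨
   (((List.range n).map (fun k => A ((k + 1 : ℕ) : ZMod n))).reverse).prod = negOne)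

def areaRep (n : ℕ) (A : ZMod n → SU11) (c p : W) : ℝ :=
  ∑ i ∈ Finset.range n, triArea c (pts A p (i + 1)) (pts A p (i + 2))

def HasArea {n : ℕ} (ρ : H n →* PU11) (a : ℝ) : Prop :=
  ∀ A : ZMod n → SU11, IsLift ρ A → ∀ c p : W, IsNeg c → IsNeg p → areaRep n A c p = a

def orbitSeq {n : ℕ} (ρ : H n →* PU11) (j : ZMod n) (z : ℂ) : ℕ → ℂ
  | 0 => z
  | (k+1) => pact (ρ (r n (j + (k : ℕ)))) (orbitSeq ρ j z k)

def iCycle {n : ℕ} (ρ : H n →* PU11) (i : ZMod n) (b e : ℂ) : List ℂ :=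
  ((List.range (n - 2)).map (fun k => [orbitSeq ρ (i + 1) b k, orbitSeq ρ (i + 1) e k])).flatten

def IsReflection (g : PU11) (q : W) : Prop :=
  ∃ A : SU11, (QuotientGroup.mk A : PU11) = g ∧
    ∀ x : W, ((A : SpecialLinearGroup (Fin 2) ℂ) : Matrix (Fin 2) (Fin 2) ℂ).mulVec x
      = Complex.I • (x - (2 * herm x q / herm q q) • q)

def Gsub (n : ℕ) : Subgroup (H n) :=
  Subgroup.closure {x : H n | ∃ i j : ZMod n, x = r n i * r n j}

lemma rr_mem (n : ℕ) (i j : ZMod n) : r n i * r n j ∈ Gsub n :=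
  Subgroup.subset_closure ⟨i, j, rfl⟩

lemma rrrr_mem (n : ℕ) (i j k l : ZMod n) :
    r n i * r n j * r n k * r n l ∈ Gsub n := by
  have h : r n i * r n j * r n k * r n l = (r n i * r n j) * (r n k * r n l) := by
    rw [mul_assoc]
  rw [h]
  exact mul_mem (rr_mem n i j) (rr_mem n k l)

def v (n : ℕ) (k : ℕ) : H n :=
  (((List.range (k % n)).map (fun m => r n ((m + 1 : ℕ) : ZMod n))).reverse).prod

def w0 (n : ℕ) (i : ℕ) : H n := if Even i then v n i else v n i * r n 0

def w (n : ℕ) (j : ℕ) : H n :=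
  if j % (2 * n - 2) ≤ n - 2 then w0 n (j % (2 * n - 2))
  else r n 0 * w0 n (j % (2 * n - 2) - (n - 1)) * r n 0

def IsLiftGW {n : ℕ} (ρ : ↥(Gsub n) →* PU11) (u : ℕ → H n) (B : ℕ → SU11) : Prop :=
  ∀ (j : ℕ) (h : u j ∈ Gsub n), (QuotientGroup.mk (B j) : PU11) = ρ ⟨u j, h⟩

def areaG (n : ℕ) (B : ℕ → SU11) (c p q : W) : ℝ :=
  ∑ j ∈ Finset.range (2 * n - 2),
    triArea c
      (((B j : SpecialLinearGroup (Fin 2) ℂ) : Matrix (Fin 2) (Fin 2) ℂ).mulVec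
        (if Even j then p else q))
      (((B ((j + 1) % (2 * n - 2)) : SpecialLinearGroup (Fin 2) ℂ)
          : Matrix (Fin 2) (Fin 2) ℂ).mulVec
        (if Even ((j + 1) % (2 * n - 2)) then p else q))

def HasAreaG {n : ℕ} (ρ : ↥(Gsub n) →* PU11) (a : ℝ) : Prop :=
  ∀ B : ℕ → SU11, IsLiftGW ρ (w n) B →
    ∀ c p q : W, IsNeg c → IsNeg p → IsNeg q → areaG n B c p q = a

def bigCycle (n : ℕ) (s t s' t' : ZMod n → ℂ) (wd : ℕ → ℂ) : List ℂ :=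
  [t 1, s 2, wd 2] ++
  ((List.range (n - 4)).map
    (fun k => [s ((k + 3 : ℕ) : ZMod n), t ((k + 3 : ℕ) : ZMod n), wd (k + 3)])).flatten ++
  [t ((n - 1 : ℕ) : ZMod n), s ((n : ℕ) : ZMod n)] ++
  [s' 2, wd (n + 1)] ++
  ((List.range (n - 4)).map
    (fun k => [s' ((k + 3 : ℕ) : ZMod n), t' ((k + 3 : ℕ) : ZMod n), wd (n + k + 2)])).flatten ++
  [t' ((n - 1 : ℕ) : ZMod n)]

def IsSE {n : ℕ} (ρ ρ' : H n →* PU11) (i : ZMod n) (t : ℝ) : Prop :=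
  IsHyperbolic (ρ (r n i * r n (i - 1))) ∧
  ∃ φ : ℝ → PU11, Continuous φ ∧ (∀ s u : ℝ, φ (s + u) = φ s * φ u) ∧
    IsHyperbolic (φ 1) ∧ φ 1 * φ 1 = ρ (r n i * r n (i - 1)) ∧
    (∀ j : ZMod n, j ≠ i - 1 → j ≠ i → ρ' (r n j) = ρ (r n j)) ∧
    ρ' (r n (i - 1)) = φ t * ρ (r n (i - 1)) * (φ t)⁻¹ ∧
    ρ' (r n i) = φ t * ρ (r n i) * (φ t)⁻¹

def ConjRep {n : ℕ} (ρ ρ' : H n →* PU11) : Prop :=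
  ∃ g : PU11, ∀ h : H n, ρ' h = g * ρ h * g⁻¹

def NormalizedAt {n : ℕ} (ρ : H n →* PU11) (i : ZMod n) : Prop :=
  IsRepeller (ρ (r n i * r n (i - 1))) (-1) ∧
  IsAttractor (ρ (r n i * r n (i - 1))) 1 ∧
  pact (ρ (r n i)) 0 = 0

def PPlus {n : ℕ} (ρ : H n →* PU11) : Prop :=
  Function.Injective ρ ∧ DiscreteTopology (MonoidHom.range ρ) ∧
  HasArea ρ (((n : ℝ) - 4) * Real.pi)

def tupleAt {n : ℕ} (ρ : H n →* PU11) (i : ZMod n) : List ℂ :=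
  (iCycle ρ i (-1) 1).drop 2

def KPlusL (n : ℕ) (l : List ℂ) : Prop :=
  l.length = 2 * n - 6 ∧ (∀ z ∈ l, ‖z‖ = 1 ∧ 0 < z.im) ∧ IsPositiveCycle l

def PrelsList (n : ℕ) : Set (FreeGroup (ZMod n)) :=
  { ((List.range n).map (fun k => FreeGroup.of ((n - k : ℕ) : ZMod n))).prod,
    ((List.range (n / 2)).map (fun k => FreeGroup.of ((n - 2 * k : ℕ) : ZMod n))).prod,
    ((List.range (n / 2)).map (fun k => FreeGroup.of ((n - 1 - 2 * k : ℕ) : ZMod n))).prod }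

abbrev Pgrp (n : ℕ) := PresentedGroup (PrelsList n)

def gp (n : ℕ) (i : ZMod n) : Pgrp n := PresentedGroup.of i

/-!
Write `uᵢ(c) = -⟨c,pᵢ⟩⟨pᵢ,pᵢ₊₁⟩⟨pᵢ₊₁,c⟩`, so that the polygon area is `∑ 2 arg uᵢ(c)`.
Since three vectors of `ℂ²` have vanishing Gram determinant, `Re uᵢ(c) > 0` for every
negative `c`; hence each `arg uᵢ` is continuous on the negative cone. Moreover
`∏ uᵢ(c) = (-1)ᵏ ∏ |⟨c,pᵢ⟩|² · ∏ ⟨pᵢ,pᵢ₊₁⟩`, whose phase does not depend on `c`, so the area is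
constant modulo `2π`. Being continuous on the connected negative cone, it is constant.
-/

end HView

theorem ZMod.sum_range_natCast {M : Type*} [AddCommMonoid M] {k : ℕ} [NeZero k]
    (f : ZMod k → M) :
    ∑ i ∈ Finset.range k, f i = ∑ x : ZMod k, f x :=
  Finset.sum_nbij' Nat.cast ZMod.val (by simp) (by simp [ZMod.val_lt])
    (fun _ hi => ZMod.val_cast_of_lt (Finset.mem_range.mp hi))
    (fun x _ => ZMod.natCast_zmod_val x)
    (fun _ _ => rfl)

namespace Complex

theorem exp_two_mul_arg_mul_I {z : ℂ} (hz : z ≠ 0) : exp (↑(2 * arg z) * I) = (z / ‖z‖) ^ 2 := by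
  have h : exp (arg z * I) = z / ‖z‖ := by
    rw [eq_div_iff (ofReal_ne_zero.mpr (norm_ne_zero_iff.mpr hz)), mul_comm,
      norm_mul_exp_arg_mul_I]
  rw [← h, ← exp_nat_mul]; push_cast; ring_nf

theorem sq_ofReal_mul_div_norm {r : ℝ} (hr : r ≠ 0) (z : ℂ) :
    ((r * z) / ‖(r : ℂ) * z‖) ^ 2 = (z / ‖z‖) ^ 2 := by
  rw [norm_mul, norm_real, Real.norm_eq_abs, ofReal_mul, div_pow, div_pow, mul_pow, mul_pow,
    ← ofReal_pow, ← ofReal_pow, sq_abs, mul_div_mul_left _ _ (by exact_mod_cast pow_ne_zero 2 hr)]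

end Complex

theorem IsPreconnected.eq_of_cexp_mul_I_eq {X : Type*} [TopologicalSpace X] {S : Set X}
    (hS : IsPreconnected S) {f : X → ℝ} (hf : ContinuousOn f S) {x y : X} (hx : x ∈ S)
    (hy : y ∈ S) (hexp : ∀ z ∈ S, exp (f z * I) = exp (f x * I)) : f x = f y := by
  have hT : IsDiscrete (AddSubgroup.zmultiples (2 * Real.pi) : Set ℝ) :=
    isDiscrete_iff_discreteTopology.mpr
      (inferInstance : DiscreteTopology (AddSubgroup.zmultiples (2 * Real.pi)))
  have hmaps : Set.MapsTo (fun z => f z - f x) S (AddSubgroup.zmultiples (2 * Real.pi)) := by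
    intro z hz
    obtain ⟨n, hn⟩ := exp_eq_exp_iff_exists_int.mp (hexp z hz)
    have him : f z = f x + n * (2 * Real.pi) := by simpa using congrArg im hn
    exact ⟨n, show n • (2 * Real.pi) = f z - f x by rw [zsmul_eq_mul]; linarith⟩
  have hconst : f x - f x = f y - f x :=
    hS.constant_of_mapsTo hT (hf.sub continuousOn_const) hmaps hx hy
  linarith

namespace HView

open ComplexConjugate

lemma herm_comm (x y : W) : herm y x = conj (herm x y) := by
  simp only [herm, map_sub, map_mul, conj_conj]; ring

lemma herm_self (x : W) : herm x x = (normSq (x 0) - normSq (x 1) : ℝ) := by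
  simp only [herm, mul_conj]; push_cast; ring

lemma isNeg_iff_norm_lt (v : W) : IsNeg v ↔ ‖v 0‖ < ‖v 1‖ := by
  rw [IsNeg, herm_self, ofReal_re, sub_neg, normSq_eq_norm_sq, normSq_eq_norm_sq,
    sq_lt_sq₀ (norm_nonneg _) (norm_nonneg _)]
  refine ⟨And.right, fun h => ⟨fun hv => ?_, h⟩⟩
  simp [hv] at h

lemma normSq_herm (x y : W) :
    normSq (herm x y) = (herm x x).re * (herm y y).re + normSq (x 0 * y 1 - x 1 * y 0) := by
  have h : herm x y * conj (herm x y) = herm x x * herm y y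
      + (x 0 * y 1 - x 1 * y 0) * conj (x 0 * y 1 - x 1 * y 0) := by
    simp only [herm, map_sub, map_mul, conj_conj]; ring
  rw [mul_conj, mul_conj] at h
  simp only [herm_self, ofReal_re] at h ⊢
  exact_mod_cast h

lemma re_herm_self_mul_le_normSq (x y : W) : (herm x x).re * (herm y y).re ≤ normSq (herm x y) :=
  (normSq_herm x y).symm ▸ le_add_of_nonneg_right (normSq_nonneg _)

/-- Three vectors of the two-dimensional space `W` have vanishing Gram determinant. -/
lemma two_mul_re_herm_mul_herm_mul_herm (c p q : W) :
    2 * (herm c p * herm p q * herm q c).re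
      = normSq (herm c q) * (herm p p).re + normSq (herm c p) * (herm q q).re
        + normSq (herm p q) * (herm c c).re - (herm c c).re * (herm p p).re * (herm q q).re := by
  have h : herm c p * herm p q * herm q c + conj (herm c p * herm p q * herm q c)
      = herm c q * conj (herm c q) * herm p p + herm c p * conj (herm c p) * herm q q
        + herm p q * conj (herm p q) * herm c c - herm c c * herm p p * herm q q := by
    simp only [herm, map_sub, map_mul, conj_conj]; ring
  rw [add_conj, mul_conj, mul_conj, mul_conj] at h
  simp only [herm_self, ofReal_re] at h ⊢
  exact_mod_cast h

lemma re_herm_mul_herm_mul_herm_neg {c p q : W} (hc : IsNeg c) (hp : IsNonpos p)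
    (hq : IsNonpos q) (hpq : herm p q ≠ 0) : (herm c p * herm p q * herm q c).re < 0 := by
  have hcq := re_herm_self_mul_le_normSq c q
  have hgram := two_mul_re_herm_mul_herm_mul_herm c p q
  nlinarith [mul_nonneg (neg_nonneg.mpr hp.2) (sub_nonneg.mpr hcq),
    mul_nonneg (neg_nonneg.mpr hq.2) (normSq_nonneg (herm c p)),
    mul_pos (neg_pos.mpr hc.2) (normSq_pos.mpr hpq)]

@[fun_prop]
lemma Continuous.herm {X : Type*} [TopologicalSpace X] {f g : X → W} (hf : Continuous f)
    (hg : Continuous g) : Continuous fun x => herm (f x) (g x) := by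
  unfold HView.herm; fun_prop

/-- The negative cone is the image of `{|a| < 1} × {b ≠ 0}` under `(a, b) ↦ (a b, b)`. -/
lemma isPreconnected_setOf_isNeg : IsPreconnected {v : W | IsNeg v} := by
  have hrank : 1 < Module.rank ℝ ℂ := by rw [Complex.rank_real_complex]; norm_num
  have hS : IsPreconnected (Metric.ball (0 : ℂ) 1 ×ˢ ({0}ᶜ : Set ℂ)) :=
    (convex_ball _ _).isPreconnected.prod
      (isConnected_compl_singleton_of_one_lt_rank hrank 0).isPreconnected
  have himage : {v : W | IsNeg v} =
      (fun ab : ℂ × ℂ => (![ab.1 * ab.2, ab.2] : W)) '' (Metric.ball (0 : ℂ) 1 ×ˢ {0}ᶜ) := by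
    ext v
    simp only [Set.mem_ofPred_eq, isNeg_iff_norm_lt, Set.mem_image, Set.mem_prod,
      Metric.mem_ball, dist_zero_right, Set.mem_compl_singleton_iff, Prod.exists]
    constructor
    · intro h
      have h1 : v 1 ≠ 0 := norm_pos_iff.mp ((norm_nonneg _).trans_lt h)
      refine ⟨v 0 / v 1, v 1, ⟨?_, h1⟩, ?_⟩
      · rwa [norm_div, div_lt_one (norm_pos_iff.mpr h1)]
      · ext i; fin_cases i <;> simp [h1]
    · rintro ⟨a, b, ⟨ha, hb⟩, rfl⟩
      simpa [norm_mul] using mul_lt_of_lt_one_left (norm_pos_iff.mpr hb) ha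
  rw [himage]
  exact hS.image _ (Continuous.continuousOn (by fun_prop))

lemma continuousOn_triArea {p q : W} (hp : IsNonpos p) (hq : IsNonpos q) (hpq : herm p q ≠ 0) :
    ContinuousOn (fun c => triArea c p q) {c | IsNeg c} := by
  intro c hc
  have hslit : -(herm c p * herm p q * herm q c) ∈ slitPlane :=
    mem_slitPlane_iff.mpr (Or.inl (by simpa using re_herm_mul_herm_mul_herm_neg hc hp hq hpq))
  have hu : Continuous fun c : W => -(herm c p * herm p q * herm q c) := by fun_prop
  have harg := ContinuousAt.comp (g := arg) (x := c) (continuousAt_arg hslit) hu.continuousAt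
  exact (continuousAt_const.mul harg).continuousWithinAt

lemma cexp_sum_triArea {k : ℕ} [NeZero k] {p : ZMod k → W} (hp : ∀ i, IsNonpos (p i))
    (hadj : ∀ i, herm (p i) (p (i + 1)) ≠ 0) {c : W} (hc : IsNeg c) :
    exp (↑(∑ i, triArea c (p i) (p (i + 1))) * I)
      = ((∏ i, herm (p i) (p (i + 1))) / ‖∏ i, herm (p i) (p (i + 1))‖) ^ 2 := by
  set u : ZMod k → ℂ := fun i => -(herm c (p i) * herm (p i) (p (i + 1)) * herm (p (i + 1)) c)
  have hu : ∀ i, u i ≠ 0 := fun i h => by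
    have hre := re_herm_mul_herm_mul_herm_neg hc (hp i) (hp (i + 1)) (hadj i)
    rw [neg_eq_zero.mp h, zero_re] at hre
    exact hre.false
  have hprod : ∏ i, u i
      = ((-1) ^ k * ∏ i, normSq (herm c (p i)) : ℝ) * ∏ i, herm (p i) (p (i + 1)) := by
    calc ∏ i, u i
        = ∏ i, (-1 : ℂ) * herm c (p i) * herm (p (i + 1)) c * herm (p i) (p (i + 1)) :=
          Finset.prod_congr rfl fun i _ => by ring
      _ = (-1) ^ k * (∏ i, herm c (p i)) * (∏ i, herm (p (i + 1)) c)
            * ∏ i, herm (p i) (p (i + 1)) := by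
          simp only [Finset.prod_mul_distrib, Finset.prod_const, Finset.card_univ, ZMod.card]
      _ = (-1) ^ k * (∏ i, herm c (p i)) * (∏ i, herm (p i) c) * ∏ i, herm (p i) (p (i + 1)) := by
          rw [Fintype.prod_equiv (Equiv.addRight 1) (fun i => herm (p (i + 1)) c)
            (fun i => herm (p i) c) fun _ => rfl]
      _ = _ := by
          rw [mul_assoc _ (∏ i, herm c (p i)), ← Finset.prod_mul_distrib]
          simp only [herm_comm c, mul_conj]
          push_cast; ring
  have hr : ((-1) ^ k * ∏ i, normSq (herm c (p i)) : ℝ) ≠ 0 := by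
    intro h
    rw [h, ofReal_zero, zero_mul] at hprod
    exact Finset.prod_ne_zero_iff.mpr (fun i _ => hu i) hprod
  have hterm : ∀ i, exp (↑(triArea c (p i) (p (i + 1))) * I) = (u i / ‖u i‖) ^ 2 :=
    fun i => Complex.exp_two_mul_arg_mul_I (hu i)
  rw [ofReal_sum, Finset.sum_mul, exp_sum, Finset.prod_congr rfl fun i _ => hterm i,
    Finset.prod_pow, Finset.prod_div_distrib, ← ofReal_prod, ← norm_prod, hprod,
    Complex.sq_ofReal_mul_div_norm hr]

theorem polygon_area_independent_of_centre_general
    (k : ℕ) (p : ZMod k → W)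
    (hp : ∀ i : ZMod k, IsNonpos (p i))
    (hadj : ∀ i : ZMod k, herm (p i) (p (i + 1)) ≠ 0)
    (c c' : W) (hc : IsNeg c) (hc' : IsNeg c') :
    (∑ i ∈ Finset.range k, triArea c (p (i : ZMod k)) (p ((i : ZMod k) + 1)))
      = ∑ i ∈ Finset.range k, triArea c' (p (i : ZMod k)) (p ((i : ZMod k) + 1)) := by
  rcases eq_zero_or_neZero k with rfl | _
  · simp
  rw [ZMod.sum_range_natCast fun i => triArea c (p i) (p (i + 1)),
    ZMod.sum_range_natCast fun i => triArea c' (p i) (p (i + 1))]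
  refine isPreconnected_setOf_isNeg.eq_of_cexp_mul_I_eq
    (continuousOn_finsetSum _ fun i _ => continuousOn_triArea (hp i) (hp (i + 1)) (hadj i))
    hc hc' fun d hd => ?_
  rw [cexp_sum_triArea hp hadj hd, cexp_sum_triArea hp hadj hc]

/-- the area of a closed geodesic polygon does not depend on the
choice of the negative centre `c`. -/
theorem polygon_area_independent_of_centre
    (k : ℕ) (hk : 3 ≤ k) (p : ZMod k → W)
    (hp : ∀ i : ZMod k, IsNonpos (p i))
    (hadj : ∀ i : ZMod k, herm (p i) (p (i + 1)) ≠ 0)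
    (c c' : W) (hc : IsNeg c) (hc' : IsNeg c') :
    (∑ i ∈ Finset.range k, triArea c (p (i : ZMod k)) (p ((i : ZMod k) + 1)))
      = ∑ i ∈ Finset.range k, triArea c' (p (i : ZMod k)) (p ((i : ZMod k) + 1)) :=
  polygon_area_independent_of_centre_general k p hp hadj c c' hc hc'

end HView
end
end

section
/- Let n ≥ 5. For each i (indices modulo n) there is a unique automorphism E_i of H_n with E_i(r_{i−1}) = r_i, E_i(r_i) = r_i r_{i−1} r_i and E_i(r_j) = r_j for all j ∉ {i−1, i}. There is a unique automorphism J of H_n with J(r_i) = r_{n−i} for all i (indices modulo n, r₀ = r_n), and J² = 1. There is a unique automorphism S of H_n with S(r_i) = r_{i+1} for all i, and S^n = 1. -/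
noncomputable section
open Matrix Complex
namespace HView

/-! A map `rᵢ ↦ fᵢ` defines an endomorphism of `H_n` as soon as every `fᵢ` is an involution and the
cyclic product `fₙ ⋯ f₁` is trivial. Conjugating `r_{a+n} ⋯ r_{a+1}` by `r_{a+1}` rotates it, so
this product may be read from any starting index. Read from `i`, the product for `E_i` begins with
`(rᵢ r_{i-1} rᵢ) rᵢ = rᵢ r_{i-1}` and otherwise agrees with the defining relation; the inverse of
`E_i` is the same construction with `i - 1` and `i` swapped. `S` rotates the defining relation and
`J` inverts it (up to rotation), and all the identities between automorphisms hold on generators. -/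

section CycleProd

variable {G : Type*} {n : ℕ}

/-- `g (a + m) * ⋯ * g (a + 1)`; for `g = r n`, `a = 0`, `m = n` this is the image of `longRel n`. -/
def cycleProd [Monoid G] (g : ZMod n → G) (a : ZMod n) (m : ℕ) : G :=
  ((List.range m).map fun k => g (a + ((k + 1 : ℕ) : ZMod n))).reverse.prod

section Monoid

variable [Monoid G]

@[simp]
lemma cycleProd_zero (g : ZMod n → G) (a : ZMod n) : cycleProd g a 0 = 1 := rfl

lemma cycleProd_succ (g : ZMod n → G) (a : ZMod n) (m : ℕ) :
    cycleProd g a (m + 1) = g (a + ((m + 1 : ℕ) : ZMod n)) * cycleProd g a m := by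
  simp [cycleProd, List.range_succ]

lemma cycleProd_succ' (g : ZMod n → G) (a : ZMod n) (m : ℕ) :
    cycleProd g a (m + 1) = cycleProd g (a + 1) m * g (a + 1) := by
  induction m with
  | zero => simp [cycleProd_succ]
  | succ m ih =>
    rw [cycleProd_succ, ih, cycleProd_succ, ← mul_assoc]
    congr 3
    push_cast
    ring

lemma cycleProd_congr {f g : ZMod n → G} {a : ZMod n} {m : ℕ}
    (h : ∀ k < m, f (a + ((k + 1 : ℕ) : ZMod n)) = g (a + ((k + 1 : ℕ) : ZMod n))) :
    cycleProd f a m = cycleProd g a m := by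
  unfold cycleProd
  congr 2
  exact List.map_congr_left fun k hk => h k (List.mem_range.mp hk)

lemma cycleProd_comp_add_right (g : ZMod n → G) (c a : ZMod n) (m : ℕ) :
    cycleProd (fun j => g (j + c)) a m = cycleProd g (a + c) m := by
  unfold cycleProd
  congr 3
  funext k
  ring_nf

end Monoid

section Group

variable [Group G]

lemma cycleProd_add_one (g : ZMod n → G) (a : ZMod n) :
    cycleProd g (a + 1) n = g (a + 1) * cycleProd g a n * (g (a + 1))⁻¹ := by
  have h := (cycleProd_succ g a n).symm.trans (cycleProd_succ' g a n)
  rw [Nat.cast_succ, ZMod.natCast_self, zero_add] at h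
  rw [eq_mul_inv_iff_mul_eq, h]

lemma cycleProd_eq_one_iff (g : ZMod n → G) (a b : ZMod n) :
    cycleProd g a n = 1 ↔ cycleProd g b n = 1 := by
  suffices h : ∀ k : ℤ, cycleProd g (a + k) n = 1 ↔ cycleProd g a n = 1 by
    obtain ⟨k, hk⟩ := ZMod.intCast_surjective (b - a)
    rw [← h k, hk, add_sub_cancel]
  intro k
  induction k using Int.induction_on with
  | zero => simp
  | succ k ih => rw [Int.cast_add, Int.cast_one, ← add_assoc, cycleProd_add_one,
      conj_eq_one_iff, ih]
  | pred k ih =>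
    rw [← ih, show a + ((-k : ℤ) : ZMod n) = a + ((-k - 1 : ℤ) : ZMod n) + 1 by push_cast; ring,
      cycleProd_add_one, conj_eq_one_iff]

lemma cycleProd_neg_inv (g : ZMod n → G) (a : ZMod n) (m : ℕ) :
    cycleProd (fun j => (g (-j))⁻¹) a m = (cycleProd g (-(a + ((m + 1 : ℕ) : ZMod n))) m)⁻¹ := by
  induction m with
  | zero => simp
  | succ m ih =>
    rw [cycleProd_succ, ih, cycleProd_succ', _root_.mul_inv_rev]
    congr 3 <;> push_cast <;> ring

lemma cycleProd_eq_of_eqOn_compl_pair (hn : 2 ≤ n) {f g : ZMod n → G} {i : ZMod n}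
    (hpair : f i * f (i - 1) = g i * g (i - 1))
    (hrest : ∀ j, j ≠ i - 1 → j ≠ i → f j = g j) :
    cycleProd f i n = cycleProd g i n := by
  obtain ⟨m, rfl⟩ : ∃ m, n = m + 2 := ⟨n - 2, by omega⟩
  have hlast : i + ((m + 1 + 1 : ℕ) : ZMod (m + 2)) = i := by
    rw [ZMod.natCast_self, add_zero]
  have hnext : i + ((m + 1 : ℕ) : ZMod (m + 2)) = i - 1 := by
    rw [eq_sub_iff_add_eq, add_assoc, ← Nat.cast_succ, hlast]
  rw [cycleProd_succ f, cycleProd_succ f, cycleProd_succ g, cycleProd_succ g, hlast, hnext,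
    ← mul_assoc, ← mul_assoc, hpair]
  congr 1
  refine cycleProd_congr fun k hk => hrest _ ?_ ?_
  · rw [ne_eq, ← hnext, add_right_inj, ZMod.natCast_eq_natCast_iff',
      Nat.mod_eq_of_lt (by omega), Nat.mod_eq_of_lt (by omega)]
    omega
  · rw [ne_eq, add_eq_left, ZMod.natCast_eq_zero_iff]
    exact Nat.not_dvd_of_pos_of_lt (by omega) (by omega)

end Group

end CycleProd

namespace H

variable {n : ℕ}

lemma mk_eq_lift_r : PresentedGroup.mk (Hrels n) = FreeGroup.lift (r n) :=
  FreeGroup.ext_hom _ _ fun _ => by simp [r, PresentedGroup.of]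

@[simp]
lemma r_mul_self (i : ZMod n) : r n i * r n i = 1 := by
  have h : FreeGroup.of i * FreeGroup.of i ∈ Hrels n := Or.inl ⟨i, rfl⟩
  simpa [mk_eq_lift_r] using PresentedGroup.one_of_mem h

@[simp]
lemma r_mul_self_mul (i : ZMod n) (x : H n) : r n i * (r n i * x) = x := by
  rw [← mul_assoc, r_mul_self, one_mul]

lemma r_inv (i : ZMod n) : (r n i)⁻¹ = r n i :=
  inv_eq_of_mul_eq_one_right (r_mul_self i)

lemma map_longRel {G : Type*} [Group G] (f : ZMod n → G) :
    FreeGroup.lift f (longRel n) = cycleProd f 0 n := by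
  simp [longRel, cycleProd, map_list_prod, List.map_reverse, Function.comp_def]

lemma cycleProd_r (a : ZMod n) : cycleProd (r n) a n = 1 := by
  rw [cycleProd_eq_one_iff _ a 0]
  have h : longRel n ∈ Hrels n := Or.inr rfl
  simpa [mk_eq_lift_r, map_longRel] using PresentedGroup.one_of_mem h

def lift {G : Type*} [Group G] (f : ZMod n → G) (hsq : ∀ i, f i * f i = 1)
    (hrel : cycleProd f 0 n = 1) : H n →* G :=
  PresentedGroup.toGroup (by
    rintro x (⟨i, rfl⟩ | rfl)
    · simpa using hsq i
    · rwa [map_longRel])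

@[simp]
lemma lift_r {G : Type*} [Group G] (f : ZMod n → G) (hsq : ∀ i, f i * f i = 1)
    (hrel : cycleProd f 0 n = 1) (i : ZMod n) : lift f hsq hrel (r n i) = f i :=
  PresentedGroup.toGroup.of _

lemma hom_ext {G : Type*} [Group G] {φ ψ : H n →* G} (h : ∀ i, φ (r n i) = ψ (r n i)) : φ = ψ :=
  PresentedGroup.ext h

lemma mulAut_ext {φ ψ : MulAut (H n)} (h : ∀ i, φ (r n i) = ψ (r n i)) : φ = ψ :=
  MulEquiv.toMonoidHom_injective (hom_ext h)

end H

section Automorphisms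

open H

variable {n : ℕ}

def rotateHom (c : ZMod n) : H n →* H n :=
  lift (fun j => r n (j + c)) (fun _ => r_mul_self _)
    (by rw [cycleProd_comp_add_right, cycleProd_r])

lemma rotateHom_r (c i : ZMod n) : rotateHom c (r n i) = r n (i + c) :=
  lift_r (fun j => r n (j + c)) _ _ i

def rotate (c : ZMod n) : MulAut (H n) :=
  MonoidHom.toMulEquiv (rotateHom c) (rotateHom (-c))
    (hom_ext fun i => by simp [rotateHom_r])
    (hom_ext fun i => by simp [rotateHom_r])

@[simp]
lemma rotate_r (c i : ZMod n) : rotate c (r n i) = r n (i + c) :=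
  rotateHom_r c i

lemma pow_apply_r_of_apply_r_eq_add_one {S : MulAut (H n)} (hS : ∀ i, S (r n i) = r n (i + 1))
    (m : ℕ) (i : ZMod n) : (S ^ m) (r n i) = r n (i + m) := by
  induction m with
  | zero => simp
  | succ m ih => rw [pow_succ', MulAut.mul_apply, ih, hS, Nat.cast_succ, add_assoc]

def reflectHom : H n →* H n :=
  lift (fun j => r n (-j)) (fun _ => r_mul_self _) (by
    rw [show (fun j => r n (-j)) = fun j => (r n (-j))⁻¹ from funext fun _ => (r_inv _).symm,
      cycleProd_neg_inv, cycleProd_r, inv_one])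

lemma reflectHom_r (i : ZMod n) : reflectHom (r n i) = r n (-i) :=
  lift_r (fun j => r n (-j)) _ _ i

def reflect : MulAut (H n) :=
  MonoidHom.toMulEquiv reflectHom reflectHom
    (hom_ext fun i => by simp [reflectHom_r])
    (hom_ext fun i => by simp [reflectHom_r])

@[simp]
lemma reflect_r (i : ZMod n) : reflect (r n i) = r n (-i) :=
  reflectHom_r i

lemma sub_one_ne_self (hn : 2 ≤ n) (i : ZMod n) : i - 1 ≠ i := by
  have : Fact (1 < n) := ⟨hn⟩
  simp

/-- The image of `r j` under `E_i` for `(a, b) = (i - 1, i)`, and under `E_i⁻¹` for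
`(a, b) = (i, i - 1)`. -/
def braidImage (a b j : ZMod n) : H n :=
  if j = a then r n b else if j = b then r n b * r n a * r n b else r n j

lemma braidImage_mul_self (a b j : ZMod n) : braidImage a b j * braidImage a b j = 1 := by
  unfold braidImage
  split_ifs <;> simp [mul_assoc]

lemma map_braidImage {a b : ZMod n} {φ : H n →* H n} (hφ : ∀ j, φ (r n j) = braidImage b a j)
    (j : ZMod n) : φ (braidImage a b j) = r n j := by
  unfold braidImage
  split_ifs with hja hjb
  · simp [hφ, braidImage, hja]
  · have hab : a ≠ b := fun h => hja (hjb.trans h.symm)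
    simp [hφ, braidImage, hab, hjb, mul_assoc]
  · simp [hφ, braidImage, hja, hjb]

lemma cycleProd_braidImage (hn : 2 ≤ n) {a b i : ZMod n}
    (hab : a = i - 1 ∧ b = i ∨ a = i ∧ b = i - 1) : cycleProd (braidImage a b) 0 n = 1 := by
  rw [cycleProd_eq_one_iff _ 0 i, ← cycleProd_r i]
  have hi := sub_one_ne_self hn i
  refine cycleProd_eq_of_eqOn_compl_pair hn ?_ fun j hj₁ hj₂ => ?_
  · rcases hab with ⟨rfl, rfl⟩ | ⟨rfl, rfl⟩
    · simp [braidImage, hi.symm, mul_assoc]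
    · simp [braidImage, hi, mul_assoc]
  · rcases hab with ⟨rfl, rfl⟩ | ⟨rfl, rfl⟩ <;> simp [braidImage, hj₁, hj₂]

def braidHom (a b : ZMod n) (hrel : cycleProd (braidImage a b) 0 n = 1) : H n →* H n :=
  lift (braidImage a b) (braidImage_mul_self a b) hrel

lemma braidHom_r {a b : ZMod n} (hrel : cycleProd (braidImage a b) 0 n = 1) (j : ZMod n) :
    braidHom a b hrel (r n j) = braidImage a b j :=
  lift_r _ _ _ j

def braid (hn : 2 ≤ n) (i : ZMod n) : MulAut (H n) :=
  MonoidHom.toMulEquiv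
    (braidHom (i - 1) i (cycleProd_braidImage hn (.inl ⟨rfl, rfl⟩)))
    (braidHom i (i - 1) (cycleProd_braidImage hn (.inr ⟨rfl, rfl⟩)))
    (hom_ext fun j => by
      rw [MonoidHom.comp_apply, braidHom_r]
      exact map_braidImage (braidHom_r _) j)
    (hom_ext fun j => by
      rw [MonoidHom.comp_apply, braidHom_r]
      exact map_braidImage (braidHom_r _) j)

lemma braid_r (hn : 2 ≤ n) (i j : ZMod n) : braid hn i (r n j) = braidImage (i - 1) i j :=
  braidHom_r (cycleProd_braidImage hn (.inl ⟨rfl, rfl⟩)) j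

lemma eq_braid_iff (hn : 2 ≤ n) (i : ZMod n) (E : MulAut (H n)) :
    E = braid hn i ↔ E (r n (i - 1)) = r n i ∧ E (r n i) = r n i * r n (i - 1) * r n i ∧
      ∀ j, j ≠ i - 1 → j ≠ i → E (r n j) = r n j := by
  have hi := sub_one_ne_self hn i
  constructor
  · rintro rfl
    exact ⟨by simp [braid_r, braidImage], by simp [braid_r, braidImage, hi.symm],
      fun j hj₁ hj₂ => by simp [braid_r, braidImage, hj₁, hj₂]⟩
  · rintro ⟨h₁, h₂, h₃⟩
    refine mulAut_ext fun j => ?_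
    rw [braid_r, braidImage]
    split_ifs with hj₁ hj₂
    · rw [hj₁, h₁]
    · rw [hj₂, h₂]
    · exact h₃ j hj₁ hj₂

end Automorphisms

/-- existence and uniqueness of the automorphisms `E_i`, `J` (with
`J² = 1`) and `S` (with `Sⁿ = 1`) of `H_n`. -/
theorem automorphisms_exist (n : ℕ) (hn : 5 ≤ n) :
    (∀ i : ZMod n, ∃! E : MulAut (H n),
      E (r n (i - 1)) = r n i ∧ E (r n i) = r n i * r n (i - 1) * r n i ∧
      ∀ j : ZMod n, j ≠ i - 1 → j ≠ i → E (r n j) = r n j) ∧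
    (∃! Jaut : MulAut (H n), ∀ i : ZMod n, Jaut (r n i) = r n (-i)) ∧
    (∀ Jaut : MulAut (H n), (∀ i : ZMod n, Jaut (r n i) = r n (-i)) →
      Jaut * Jaut = 1) ∧
    (∃! S : MulAut (H n), ∀ i : ZMod n, S (r n i) = r n (i + 1)) ∧
    (∀ S : MulAut (H n), (∀ i : ZMod n, S (r n i) = r n (i + 1)) → S ^ n = 1) := by
  have hn₂ : 2 ≤ n := by omega
  refine ⟨fun i => ⟨braid hn₂ i, (eq_braid_iff hn₂ i _).mp rfl,
      fun E hE => (eq_braid_iff hn₂ i E).mpr hE⟩,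
    ⟨reflect, reflect_r, fun J hJ => H.mulAut_ext fun i => by rw [hJ, reflect_r]⟩,
    fun J hJ => H.mulAut_ext fun i => by rw [MulAut.mul_apply, hJ, hJ, neg_neg, MulAut.one_apply],
    ⟨rotate 1, rotate_r 1, fun S hS => H.mulAut_ext fun i => by rw [hS, rotate_r]⟩,
    fun S hS => H.mulAut_ext fun i => ?_⟩
  rw [pow_apply_r_of_apply_r_eq_add_one hS, ZMod.natCast_self, add_zero, MulAut.one_apply]

end HView
end
end

section
/- Let n ≥ 5 and set Ŝ := E_{n−1}E_{n−2}⋯E₂E₁. The following relations hold in Aut H_n: S = E₁E₂⋯E_{n−1}; E_i^S = E_{i+1} for all i; S^n = 1; Ŝ^n = 1; S Ŝ S Ŝ = 1; I_{r_n} = S Ŝ; I_{r₁} = E₁E₂⋯E_{n−1}E_nE_{n−1}⋯E₃E₂; E_i E_{i+1} E_i = E_{i+1} E_i E_{i+1} for all i; E_i E_j = E_j E_i whenever the sets {i−1, i} and {j−1, j} of residues modulo n are disjoint; E_i^J = E_{n+1−i}^{−1} for all i; and J² = 1. In particular, every inner automorphism of H_n lies in Aut⁺H_n. -/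
noncomputable section
open Matrix Complex
theorem ZMod.natCast_pred_self {n : ℕ} [NeZero n] : ((n - 1 : ℕ) : ZMod n) = -1 :=
  eq_neg_of_add_eq_zero_left <| by
    rw [← Nat.cast_add_one, Nat.sub_one_add_one (NeZero.ne n), ZMod.natCast_self]

theorem ZMod.natCast_ne_natCast_of_lt {n a b : ℕ} (ha : a < n) (hb : b < n) (h : a ≠ b) :
    (a : ZMod n) ≠ b := fun hab =>
  h (by rw [← ZMod.val_natCast_of_lt ha, hab, ZMod.val_natCast_of_lt hb])

theorem MulAut.inv_apply_eq_iff {G : Type*} [Group G] (f : MulAut G) {x y : G} :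
    f⁻¹ x = y ↔ x = f y := by
  rw [MulAut.inv_def, MulEquiv.symm_apply_eq]

theorem MulAut.mul_conj_mul_inv {G : Type*} [Group G] (f : MulAut G) (g : G) :
    f * MulAut.conj g * f⁻¹ = MulAut.conj (f g) := by
  ext x
  simp

theorem MulAut.inv_mul_conj_pow {G : Type*} [Group G] (f : MulAut G) (g : G) (k : ℕ) :
    (f⁻¹ * MulAut.conj g) ^ k =
      (f ^ k)⁻¹ * MulAut.conj ((List.range k).map fun i => (f ^ i) g).reverse.prod := by
  induction k with
  | zero => simp
  | succ k ih =>
    have hconj : MulAut.conj g * (f ^ k)⁻¹ = (f ^ k)⁻¹ * MulAut.conj ((f ^ k) g) := by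
      rw [← MulAut.mul_conj_mul_inv]; group
    rw [pow_succ', ih, ← mul_assoc, mul_assoc f⁻¹, hconj, List.range_succ, List.map_append,
      List.reverse_append, List.prod_append, map_mul, pow_succ, _root_.mul_inv_rev]
    simp [mul_assoc]

namespace HView

variable {n : ℕ}

theorem r_mul_self (i : ZMod n) : r n i * r n i = 1 := by
  have h : PresentedGroup.mk (Hrels n) (FreeGroup.of i * FreeGroup.of i) = 1 :=
    (QuotientGroup.eq_one_iff _).mpr (Subgroup.subset_normalClosure (Or.inl ⟨i, rfl⟩))
  rwa [map_mul] at h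

theorem r_inv (i : ZMod n) : (r n i)⁻¹ = r n i :=
  inv_eq_of_mul_eq_one_right (r_mul_self i)

theorem r_mul_cancel_left (i : ZMod n) (y : H n) : r n i * (r n i * y) = y := by
  rw [← mul_assoc, r_mul_self, one_mul]

def ascProd {M : Type*} [Monoid M] (f : ZMod n → M) (m : ℕ) : M :=
  ((List.range m).map fun k => f ((k + 1 : ℕ) : ZMod n)).prod

def descProd {M : Type*} [Monoid M] (f : ZMod n → M) (m : ℕ) : M :=
  ((List.range m).map fun k => f ((k + 1 : ℕ) : ZMod n)).reverse.prod

section Products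

variable {M : Type*} [Monoid M] (f : ZMod n → M)

@[simp] theorem ascProd_zero : ascProd f 0 = 1 := rfl

@[simp] theorem descProd_zero : descProd f 0 = 1 := rfl

theorem ascProd_succ (m : ℕ) : ascProd f (m + 1) = ascProd f m * f (m + 1) := by
  simp [ascProd, List.range_succ]

theorem descProd_succ (m : ℕ) : descProd f (m + 1) = f (m + 1) * descProd f m := by
  simp [descProd, List.range_succ]

theorem descProd_succ_eq_mul_one (m : ℕ) :
    descProd f (m + 1) = ((List.range m).map fun k => f ((k + 2 : ℕ) : ZMod n)).reverse.prod *
      f 1 := by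
  simp [descProd, List.range_succ_eq_map, Function.comp_def, add_assoc, one_add_one_eq_two]

end Products

theorem descProd_r_self : descProd (r n) n = 1 := by
  have h : PresentedGroup.mk (Hrels n) (longRel n) = 1 :=
    (QuotientGroup.eq_one_iff _).mpr (Subgroup.subset_normalClosure (Or.inr rfl))
  rwa [longRel, map_list_prod, List.map_reverse, List.map_map] at h

theorem descProd_r_pred [NeZero n] : descProd (r n) (n - 1) = r n 0 := by
  obtain ⟨m, rfl⟩ := Nat.exists_eq_add_one_of_ne_zero (NeZero.ne n)
  have h := descProd_r_self (n := m + 1)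
  rw [descProd_succ, ← Nat.cast_add_one, ZMod.natCast_self] at h
  rw [Nat.add_sub_cancel, ← r_mul_cancel_left 0 (descProd _ _), h, mul_one]

theorem prod_range_r_eq_one [NeZero n] :
    ((List.range n).map fun i : ℕ => r n i).reverse.prod = 1 := by
  obtain ⟨m, rfl⟩ := Nat.exists_eq_add_one_of_ne_zero (NeZero.ne n)
  have h := descProd_r_pred (n := m + 1)
  rw [Nat.add_sub_cancel, descProd] at h
  rw [List.range_succ_eq_map, List.map_cons, List.map_map, List.reverse_cons, List.prod_append,
    List.prod_singleton, Nat.cast_zero]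
  exact (congrArg (· * r _ 0) h).trans (r_mul_self 0)

theorem aut_ext {f g : MulAut (H n)} (h : ∀ i, f (r n i) = g (r n i)) : f = g :=
  MulEquiv.toMonoidHom_injective (PresentedGroup.ext h)

theorem aut_ext_of_lt [NeZero n] {f g : MulAut (H n)} (h : ∀ j < n, f (r n j) = g (r n j)) :
    f = g :=
  aut_ext fun i => by simpa using h i.val (ZMod.val_lt i)

def IsTwist (e : MulAut (H n)) (i : ZMod n) : Prop :=
  e (r n (i - 1)) = r n i ∧ e (r n i) = r n i * r n (i - 1) * r n i ∧
    ∀ j : ZMod n, j ≠ i - 1 → j ≠ i → e (r n j) = r n j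

namespace IsTwist

variable {e e' : MulAut (H n)} {i j : ZMod n}

theorem inv_apply_self (h : IsTwist e i) : e⁻¹ (r n i) = r n (i - 1) :=
  (MulAut.inv_apply_eq_iff e).mpr h.1.symm

theorem inv_apply_sub_one (h : IsTwist e i) :
    e⁻¹ (r n (i - 1)) = r n (i - 1) * r n i * r n (i - 1) := by
  rw [MulAut.inv_apply_eq_iff, map_mul, map_mul, h.1, h.2.1]
  simp [mul_assoc, r_mul_cancel_left, r_mul_self]

theorem inv_apply_of_ne (h : IsTwist e i) (h₁ : j ≠ i - 1) (h₂ : j ≠ i) :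
    e⁻¹ (r n j) = r n j :=
  (MulAut.inv_apply_eq_iff e).mpr (h.2.2 j h₁ h₂).symm

theorem apply_natCast_of_ne {m : ℕ} (h : IsTwist e (m + 1)) (hm : m + 1 < n) (k : ℕ)
    (hk : k < n) (h₁ : k ≠ m) (h₂ : k ≠ m + 1) : e (r n k) = r n k :=
  h.2.2 k (by simpa using ZMod.natCast_ne_natCast_of_lt hk (by omega) h₁)
    (by simpa using ZMod.natCast_ne_natCast_of_lt hk hm h₂)

theorem unique (h : IsTwist e i) (h' : IsTwist e' i) : e = e' := by
  refine aut_ext fun j => ?_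
  by_cases h₁ : j = i - 1
  · rw [h₁, h.1, h'.1]
  by_cases h₂ : j = i
  · rw [h₂, h.2.1, h'.2.1]
  rw [h.2.2 j h₁ h₂, h'.2.2 j h₁ h₂]

theorem conj_of_translate (h : IsTwist e i) {f : MulAut (H n)} {a : ZMod n}
    (hf : ∀ j, f (r n j) = r n (j + a)) : IsTwist (f * e * f⁻¹) (i + a) := by
  have hf' : ∀ j, f⁻¹ (r n j) = r n (j - a) := fun j => by
    rw [MulAut.inv_apply_eq_iff, hf, sub_add_cancel]
  refine ⟨?_, ?_, fun j h₁ h₂ => ?_⟩ <;> simp only [MulAut.mul_apply, hf']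
  · rw [add_sub_right_comm, add_sub_cancel_right, h.1, hf]
  · rw [add_sub_cancel_right, h.2.1, map_mul, map_mul, hf, hf, sub_add_eq_add_sub]
  · rw [h.2.2 _ (fun hj => h₁ (by linear_combination hj))
      (fun hj => h₂ (by linear_combination hj)), hf, sub_add_cancel]

theorem conj_inv_of_reflect (h : IsTwist e i) {f : MulAut (H n)} {a : ZMod n}
    (hf : ∀ j, f (r n j) = r n (a - j)) : IsTwist (f * e⁻¹ * f⁻¹) (a + 1 - i) := by
  have hf' : ∀ j, f⁻¹ (r n j) = r n (a - j) := fun j => by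
    rw [MulAut.inv_apply_eq_iff, hf, sub_sub_cancel]
  refine ⟨?_, ?_, fun j h₁ h₂ => ?_⟩ <;> simp only [MulAut.mul_apply, hf']
  · rw [show a - (a + 1 - i - 1) = i by ring, h.inv_apply_self, hf,
      show a - (i - 1) = a + 1 - i by ring]
  · rw [show a - (a + 1 - i) = i - 1 by ring, h.inv_apply_sub_one, map_mul, map_mul, hf, hf,
      show a - (i - 1) = a + 1 - i by ring, show a - i = a + 1 - i - 1 by ring]
  · rw [h.inv_apply_of_ne (fun hj => h₂ (by linear_combination -hj))
      (fun hj => h₁ (by linear_combination -hj)), hf, sub_sub_cancel]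

theorem braid (h2 : (2 : ZMod n) ≠ 0) (he : IsTwist e i) (he' : IsTwist e' (i + 1)) :
    e * e' * e = e' * e * e' := by
  have h1 : (1 : ZMod n) ≠ 0 := fun h => h2 (by rw [← one_add_one_eq_two, h, add_zero])
  obtain ⟨a₁, a₂, a₃⟩ := he
  obtain ⟨b₁, b₂, b₃⟩ := he'
  rw [add_sub_cancel_right] at b₁ b₂ b₃
  have a₄ := a₃ (i + 1) (fun h => h2 (by linear_combination h))
    (fun h => h1 (by linear_combination h))
  have b₄ := b₃ (i - 1) (fun h => h1 (by linear_combination -h))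
    (fun h => h2 (by linear_combination -h))
  refine aut_ext fun k => ?_
  obtain rfl | hk₁ := eq_or_ne k (i - 1)
  · simp only [MulAut.mul_apply, a₁, a₄, b₁, b₄]
  obtain rfl | hk₂ := eq_or_ne k i
  · simp only [MulAut.mul_apply, map_mul, a₁, a₂, a₄, b₁, b₂, b₄]
  obtain rfl | hk₃ := eq_or_ne k (i + 1)
  · simp only [MulAut.mul_apply, map_mul, a₂, a₄, b₁, b₂, b₄]
    simp only [mul_assoc, r_mul_cancel_left]
  simp only [MulAut.mul_apply, a₃ k hk₁ hk₂, b₃ k hk₂ hk₃]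

theorem commute (he : IsTwist e i) (he' : IsTwist e' j)
    (hd : Disjoint ({i - 1, i} : Set (ZMod n)) {j - 1, j}) : Commute e e' := by
  have hd' := Set.disjoint_left.mp hd
  obtain ⟨a₁, a₂, a₃⟩ := he
  obtain ⟨b₁, b₂, b₃⟩ := he'
  have hi₁ : i - 1 ∉ ({j - 1, j} : Set (ZMod n)) := hd' (by simp)
  have hi₂ : i ∉ ({j - 1, j} : Set (ZMod n)) := hd' (by simp)
  have hj₁ : j - 1 ∉ ({i - 1, i} : Set (ZMod n)) := fun h => hd' h (by simp)
  have hj₂ : j ∉ ({i - 1, i} : Set (ZMod n)) := fun h => hd' h (by simp)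
  simp only [Set.mem_insert_iff, Set.mem_singleton_iff, not_or] at hi₁ hi₂ hj₁ hj₂
  have c₁ := b₃ _ hi₁.1 hi₁.2
  have c₂ := b₃ _ hi₂.1 hi₂.2
  have c₃ := a₃ _ hj₁.1 hj₁.2
  have c₄ := a₃ _ hj₂.1 hj₂.2
  refine aut_ext fun k => ?_
  obtain rfl | hk₁ := eq_or_ne k (i - 1)
  · simp only [MulAut.mul_apply, a₁, c₁, c₂]
  obtain rfl | hk₂ := eq_or_ne k i
  · simp only [MulAut.mul_apply, map_mul, a₂, c₁, c₂]
  obtain rfl | hk₃ := eq_or_ne k (j - 1)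
  · simp only [MulAut.mul_apply, b₁, c₃, c₄]
  obtain rfl | hk₄ := eq_or_ne k j
  · simp only [MulAut.mul_apply, map_mul, b₂, c₃, c₄]
  simp only [MulAut.mul_apply, a₃ k hk₁ hk₂, b₃ k hk₃ hk₄]

end IsTwist

section Shift

variable {S : MulAut (H n)} (hS : ∀ i, S (r n i) = r n (i + 1))
include hS

theorem shift_pow_apply (k : ℕ) (j : ZMod n) :
    (S ^ k) (r n j) = r n (j + k) := by
  induction k with
  | zero => simp
  | succ k ih => rw [pow_succ', MulAut.mul_apply, ih, hS, Nat.cast_add_one, add_assoc]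

theorem shift_pow_card : S ^ n = 1 :=
  aut_ext fun j => by rw [shift_pow_apply hS, ZMod.natCast_self, add_zero, MulAut.one_apply]

end Shift

section Twists

variable {E : ZMod n → MulAut (H n)} (hE : ∀ i, IsTwist (E i) i)
include hE

theorem ascProd_twists_apply {m : ℕ} (hm : m < n) :
    (∀ j < m, ascProd E m (r n j) = r n (j + 1)) ∧
    ascProd E m (r n m) = descProd (r n) m * r n 0 * (descProd (r n) m)⁻¹ ∧
    ∀ j, m < j → j < n → ascProd E m (r n j) = r n j := by
  induction m with
  | zero => simp
  | succ m ih =>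
    obtain ⟨below, diag, above⟩ := ih (by omega)
    have fix := (hE (m + 1)).apply_natCast_of_ne hm
    obtain ⟨e₁, e₂, -⟩ := hE (m + 1)
    rw [add_sub_cancel_right] at e₁ e₂
    have above_succ : ascProd E m (r n (m + 1)) = r n (m + 1) := by
      simpa using above (m + 1) (by omega) hm
    push_cast
    simp only [ascProd_succ, MulAut.mul_apply]
    refine ⟨fun j hj => ?_, ?_, fun j hj₁ hj₂ => ?_⟩
    · obtain hj | rfl := Nat.lt_succ_iff_lt_or_eq.mp hj
      · rw [fix j (by omega) (by omega) (by omega), below j hj]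
      · rw [e₁, above_succ]
    · rw [e₂, map_mul, map_mul, above_succ, diag, descProd_succ, _root_.mul_inv_rev, r_inv]
      simp only [mul_assoc]
    · rw [fix j hj₂ (by omega) (by omega), above j (by omega) hj₂]

theorem descProd_twists_apply {m : ℕ} (hm : m < n) :
    descProd E m (r n 0) = r n m ∧
    (∀ j < m, descProd E m (r n (j + 1)) = r n m * r n j * r n m) ∧
    ∀ j, m < j → j < n → descProd E m (r n j) = r n j := by
  induction m with
  | zero => simp
  | succ m ih =>
    obtain ⟨at_zero, below, above⟩ := ih (by omega)
    have fix := (hE (m + 1)).apply_natCast_of_ne hm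
    obtain ⟨e₁, e₂, -⟩ := hE (m + 1)
    rw [add_sub_cancel_right] at e₁ e₂
    have above_succ : descProd E m (r n (m + 1)) = r n (m + 1) := by
      simpa using above (m + 1) (by omega) hm
    push_cast
    simp only [descProd_succ, MulAut.mul_apply]
    refine ⟨by rw [at_zero, e₁], fun j hj => ?_, fun j hj₁ hj₂ => ?_⟩
    · obtain hj | rfl := Nat.lt_succ_iff_lt_or_eq.mp hj
      · rw [below j hj, map_mul, map_mul, e₁, fix j (by omega) (by omega) (by omega)]
      · rw [above_succ, e₂]
    · rw [above j (by omega) hj₂, fix j hj₂ (by omega) (by omega)]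

theorem descProd_pred_twists_apply [NeZero n] (j : ZMod n) :
    descProd E (n - 1) (r n j) = r n (-1) * r n (j - 1) * r n (-1) := by
  obtain ⟨at_zero, below, -⟩ := descProd_twists_apply hE (Nat.sub_one_lt (NeZero.ne n))
  rw [ZMod.natCast_pred_self] at at_zero below
  obtain rfl | hj := eq_or_ne j 0
  · rw [at_zero, zero_sub, r_mul_self, one_mul]
  have hv : j.val ≠ 0 := (ZMod.val_ne_zero j).mpr hj
  have hpred : ((j.val - 1 : ℕ) : ZMod n) + 1 = j := by
    rw [← Nat.cast_add_one, Nat.sub_one_add_one hv, ZMod.natCast_zmod_val]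
  have := below (j.val - 1) (by have := ZMod.val_lt j; omega)
  rwa [hpred, eq_sub_of_add_eq hpred] at this

theorem conj_twist_of_reflect {J : MulAut (H n)} (hJ : ∀ i, J (r n i) = r n (-i)) (i : ZMod n) :
    J * E i * J⁻¹ = (E (1 - i))⁻¹ := by
  have h := ((hE i).conj_inv_of_reflect (a := 0) fun j => by rw [zero_sub, hJ]).unique (hE _)
  rw [zero_add] at h
  rw [← h]
  group

variable {S : MulAut (H n)} (hS : ∀ i, S (r n i) = r n (i + 1))
include hS

theorem eq_ascProd_of_shift [NeZero n] : S = ascProd E (n - 1) := by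
  obtain ⟨below, diag, -⟩ := ascProd_twists_apply hE (Nat.sub_one_lt (NeZero.ne n))
  refine aut_ext_of_lt fun j hj => ?_
  rw [hS]
  obtain hj | rfl := (Nat.le_sub_one_of_lt hj).lt_or_eq
  · rw [below j hj]
  · rw [diag, descProd_r_pred, ZMod.natCast_pred_self, neg_add_cancel, r_inv, r_mul_self, one_mul]

theorem shift_mul_descProd [NeZero n] :
    S * descProd E (n - 1) = MulAut.conj (r n 0) :=
  aut_ext fun j => by
    rw [MulAut.mul_apply, descProd_pred_twists_apply hE, map_mul, map_mul, hS, hS, neg_add_cancel,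
      sub_add_cancel, MulAut.conj_apply, r_inv]

theorem descProd_pow_card [NeZero n] : descProd E (n - 1) ^ n = 1 := by
  rw [eq_inv_mul_of_mul_eq (shift_mul_descProd hE hS), MulAut.inv_mul_conj_pow,
    shift_pow_card hS, inv_one, one_mul]
  simp only [shift_pow_apply hS, zero_add]
  rw [prod_range_r_eq_one, map_one]

theorem conj_r_one_eq_twists (hn : 2 ≤ n) :
    MulAut.conj (r n 1) = ascProd E (n - 1) * E 0 *
      ((List.range (n - 2)).map fun k => E ((k + 2 : ℕ) : ZMod n)).reverse.prod := by
  have : NeZero n := ⟨by omega⟩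
  rw [← eq_ascProd_of_shift hE hS]
  have hdesc := descProd_succ_eq_mul_one E (n - 2)
  rw [show n - 2 + 1 = n - 1 by omega] at hdesc
  have hSE : S * E 0 * S⁻¹ = E 1 := by
    simpa using ((hE 0).conj_of_translate hS).unique (hE (0 + 1))
  have hS' : S⁻¹ (r n 0) = r n (-1) := by
    rw [MulAut.inv_apply_eq_iff, hS, neg_add_cancel]
  have hTS : descProd E (n - 1) * S = MulAut.conj (r n (-1)) := by
    rw [eq_inv_mul_of_mul_eq (shift_mul_descProd hE hS), ← hS', ← MulAut.mul_conj_mul_inv,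
      inv_inv]
  have hE0 : E 0 (r n (-1)) = r n 0 := by simpa using (hE 0).1
  calc MulAut.conj (r n 1)
      = S * MulAut.conj (r n 0) * S⁻¹ := by rw [MulAut.mul_conj_mul_inv, hS, zero_add]
    _ = S * (E 0 * MulAut.conj (r n (-1)) * (E 0)⁻¹) * S⁻¹ := by
      rw [MulAut.mul_conj_mul_inv (E 0), hE0]
    _ = S * E 0 * (descProd E (n - 1) * (E 1)⁻¹) := by rw [← hTS, ← hSE]; group
    _ = _ := by rw [hdesc, mul_inv_cancel_right]

theorem conj_mem_closure_twists [NeZero n] (h : H n) :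
    MulAut.conj h ∈ Subgroup.closure (Set.range E) := by
  set K := Subgroup.closure (Set.range E)
  have hE_mem : ∀ k : ℕ, E ((k + 1 : ℕ) : ZMod n) ∈ K :=
    fun k => Subgroup.subset_closure ⟨_, rfl⟩
  have hS_mem : S ∈ K := by
    rw [eq_ascProd_of_shift hE hS]
    exact K.list_prod_mem fun x hx => by
      obtain ⟨k, -, rfl⟩ := List.mem_map.mp hx
      exact hE_mem k
  have hdesc_mem : descProd E (n - 1) ∈ K :=
    K.list_prod_mem fun x hx => by
      obtain ⟨k, -, rfl⟩ := List.mem_map.mp (List.mem_reverse.mp hx)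
      exact hE_mem k
  have hr_mem : ∀ i, MulAut.conj (r n i) ∈ K := fun i => by
    rw [← ZMod.natCast_zmod_val i, ← zero_add (i.val : ZMod n), ← shift_pow_apply hS,
      ← MulAut.mul_conj_mul_inv, ← shift_mul_descProd hE hS]
    exact mul_mem (mul_mem (pow_mem hS_mem _) (mul_mem hS_mem hdesc_mem))
      (inv_mem (pow_mem hS_mem _))
  exact PresentedGroup.generated_by _ (K.comap MulAut.conj) hr_mem h

end Twists

/-- the standard relations in `Aut H_n` among the Dehn twists `E_i`, the
shift `S`, `Ŝ`, the inner automorphisms and `J`; in particular all inner automorphisms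
lie in `Aut⁺H_n`. -/
theorem aut_relations (n : ℕ) (hn : 5 ≤ n)
    (E : ZMod n → MulAut (H n))
    (hE : ∀ i : ZMod n, (E i) (r n (i - 1)) = r n i ∧
      (E i) (r n i) = r n i * r n (i - 1) * r n i ∧
      ∀ j : ZMod n, j ≠ i - 1 → j ≠ i → (E i) (r n j) = r n j)
    (S : MulAut (H n)) (hS : ∀ i : ZMod n, S (r n i) = r n (i + 1))
    (Jaut : MulAut (H n)) (hJ : ∀ i : ZMod n, Jaut (r n i) = r n (-i))
    (Shat : MulAut (H n))
    (hShat : Shat =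
      (((List.range (n - 1)).map (fun k => E ((k + 1 : ℕ) : ZMod n))).reverse).prod) :
    S = ((List.range (n - 1)).map (fun k => E ((k + 1 : ℕ) : ZMod n))).prod ∧
    (∀ i : ZMod n, S * E i * S⁻¹ = E (i + 1)) ∧
    S ^ n = 1 ∧ Shat ^ n = 1 ∧ S * Shat * S * Shat = 1 ∧
    MulAut.conj (r n 0) = S * Shat ∧
    MulAut.conj (r n 1) =
      (((List.range (n - 1)).map (fun k => E ((k + 1 : ℕ) : ZMod n))) ++ [E 0] ++
        (((List.range (n - 2)).map (fun k => E ((k + 2 : ℕ) : ZMod n))).reverse)).prod ∧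
    (∀ i : ZMod n, E i * E (i + 1) * E i = E (i + 1) * E i * E (i + 1)) ∧
    (∀ i j : ZMod n, Disjoint ({i - 1, i} : Set (ZMod n)) ({j - 1, j} : Set (ZMod n)) →
      E i * E j = E j * E i) ∧
    (∀ i : ZMod n, Jaut * E i * Jaut⁻¹ = (E (1 - i))⁻¹) ∧
    Jaut * Jaut = 1 ∧
    (∀ h : H n, MulAut.conj h ∈ Subgroup.closure (Set.range E)) := by
  have hE : ∀ i, IsTwist (E i) i := hE
  have : NeZero n := ⟨by omega⟩
  have h2 : (2 : ZMod n) ≠ 0 := by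
    simpa using ZMod.natCast_ne_natCast_of_lt (n := n) (a := 2) (b := 0) (by omega) (by omega)
      (by omega)
  have hSŜ : S * Shat = MulAut.conj (r n 0) := hShat ▸ shift_mul_descProd hE hS
  refine ⟨eq_ascProd_of_shift hE hS, fun i => ((hE i).conj_of_translate hS).unique (hE (i + 1)),
    shift_pow_card hS, hShat ▸ descProd_pow_card hE hS, ?_, hSŜ.symm, ?_,
    fun i => (hE i).braid h2 (hE (i + 1)), fun i j hd => ((hE i).commute (hE j) hd).eq,
    conj_twist_of_reflect hE hJ, aut_ext fun j => by simp [hJ],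
    conj_mem_closure_twists hE hS⟩
  · rw [mul_assoc _ S Shat, hSŜ, ← map_mul, r_mul_self, map_one]
  · rw [List.prod_append, List.prod_append, List.prod_singleton]
    exact conj_r_one_eq_twists hE hS (by omega)

end HView
end
end
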